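/- (Embedding Principle.) Given NN({m_l}_{l=0}^L) and any K-neuron wider NN({m'_l}_{l=0}^L) (i.e., m'_0 = m_0, m'_L = m_L, m'_l ≥ m_l for all l ∈ [L-1], and K = Σ_{l=1}^{L-1}(m'_l − m_l)), there exists a map T from the narrow parameter space to the wide parameter space, obtained as a composition of K one-step null or one-step splitting embeddings, such that for every data S, loss ℓ and activation σ (each differentiable) and every critical point θ^c of the narrow network's empirical risk, T(θ^c) is a critical point of the wider network's empirical risk and the output functions coincide: f_{T(θ^c)}(x) = f_{θ^c}(x) for all x ∈ ℝ^d. -/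

import Mathlib

namespace EmbeddingPrinciple

/-- Parameters of a fully-connected NN: `(θ l).1 i j` is the weight `W^{[l+1]}_{ij}`
and `(θ l).2 i` is the bias `b^{[l+1]}_i` (the paper's layer `l` corresponds to index `l-1`).
Only the coordinates below the widths are meaningful for a concrete architecture. -/
abbrev NNParams : Type := ℕ → (ℕ → ℕ → ℝ) × (ℕ → ℝ)

/-- Feature vectors `f^{[l]}` (entrywise activation `σ`); `m` is the width function. -/
noncomputable def feat (σ : ℝ → ℝ) (m : ℕ → ℕ) (θ : NNParams) (x : ℕ → ℝ) : ℕ → ℕ → ℝ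
  | 0 => x
  | l + 1 => fun i =>
      σ ((∑ j ∈ Finset.range (m l), (θ l).1 i j * feat σ m θ x l j) + (θ l).2 i)

/-- Pre-activation of layer `l+1`: `W^{[l+1]} f^{[l]} + b^{[l+1]}`. -/
noncomputable def preact (σ : ℝ → ℝ) (m : ℕ → ℕ) (θ : NNParams) (x : ℕ → ℝ) (l i : ℕ) : ℝ :=
  (∑ j ∈ Finset.range (m l), (θ l).1 i j * feat σ m θ x l j) + (θ l).2 i

/-- Output `f_θ` of the `(K+1)`-layer network (the paper's `L` is `K+1`). -/
noncomputable def nnOut (σ : ℝ → ℝ) (m : ℕ → ℕ) (K : ℕ) (θ : NNParams) (x : ℕ → ℝ) :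
    ℕ → ℝ := fun i => preact σ m θ x K i

/-- Feature gradient `g^{[l+1]} = σ'(W^{[l+1]} f^{[l]} + b^{[l+1]})`. -/
noncomputable def gFeat (σ : ℝ → ℝ) (m : ℕ → ℕ) (θ : NNParams) (x : ℕ → ℝ) (l i : ℕ) : ℝ :=
  deriv σ (preact σ m θ x l i)

/-- Output truncated to the valid output coordinates. -/
noncomputable def truncOut (σ : ℝ → ℝ) (m : ℕ → ℕ) (K : ℕ) (θ : NNParams) (x : ℕ → ℝ) :
    ℕ → ℝ := fun i => if i < m (K + 1) then nnOut σ m K θ x i else 0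

/-- Empirical risk `R_S(θ) = (1/n) ∑ᵢ ℓ(f_θ(xᵢ), yᵢ)`. -/
noncomputable def risk (σ : ℝ → ℝ) (m : ℕ → ℕ) (K : ℕ)
    (loss : (ℕ → ℝ) → (ℕ → ℝ) → ℝ) {n : ℕ} (X Y : Fin n → ℕ → ℝ) (θ : NNParams) : ℝ :=
  (n : ℝ)⁻¹ * ∑ a : Fin n, loss (truncOut σ m K θ (X a)) (Y a)

/-- Update a single weight coordinate. -/
def updW (θ : NNParams) (l i j : ℕ) (t : ℝ) : NNParams := fun l' =>
  if l' = l then ((fun i' j' => if i' = i ∧ j' = j then t else (θ l).1 i' j'), (θ l).2)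
  else θ l'

/-- Update a single bias coordinate. -/
def updB (θ : NNParams) (l i : ℕ) (t : ℝ) : NNParams := fun l' =>
  if l' = l then ((θ l).1, fun i' => if i' = i then t else (θ l).2 i') else θ l'

/-- `θ` is a critical point of `R` : all partial derivatives with respect to the valid
coordinates of the `(K+1)`-layer architecture with width function `m` vanish. -/
def IsCritical (R : NNParams → ℝ) (m : ℕ → ℕ) (K : ℕ) (θ : NNParams) : Prop :=
  (∀ l, l ≤ K → ∀ i, i < m (l + 1) → ∀ j, j < m l →
      deriv (fun t => R (updW θ l i j t)) ((θ l).1 i j) = 0) ∧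
  (∀ l, l ≤ K → ∀ i, i < m (l + 1) →
      deriv (fun t => R (updB θ l i t)) ((θ l).2 i) = 0)

/-- Equality of two parameter tuples on all valid coordinates of the architecture. -/
def ParamEqOn (m : ℕ → ℕ) (K : ℕ) (θ₁ θ₂ : NNParams) : Prop :=
  ∀ l, l ≤ K → ∀ i, i < m (l + 1) →
    (∀ j, j < m l → (θ₁ l).1 i j = (θ₂ l).1 i j) ∧ (θ₁ l).2 i = (θ₂ l).2 i

/-- Error vectors by reversed index: `errRev … t = z^{[K+1-t]}`, where `z^{[K+1]} = ∇ℓ`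
(represented by the function `dloss`) and `z^{[l]} = (W^{[l+1]})ᵀ (z^{[l+1]} ∘ g^{[l+1]})`. -/
noncomputable def errRev (σ : ℝ → ℝ) (m : ℕ → ℕ) (K : ℕ) (θ : NNParams)
    (dloss : (ℕ → ℝ) → (ℕ → ℝ) → ℕ → ℝ) (x y : ℕ → ℝ) : ℕ → ℕ → ℝ
  | 0 => dloss (truncOut σ m K θ x) y
  | t + 1 => fun j =>
      ∑ i ∈ Finset.range (m (K + 1 - t)),
        (θ (K - t)).1 i j *
          (errRev σ m K θ dloss x y t i * (if t = 0 then 1 else gFeat σ m θ x (K - t) i))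

/-- `e^{[l]} = z^{[l]} ∘ g^{[l]}` (with `g^{[K+1]} = 1`). -/
noncomputable def errE (σ : ℝ → ℝ) (m : ℕ → ℕ) (K : ℕ) (θ : NNParams)
    (dloss : (ℕ → ℝ) → (ℕ → ℝ) → ℕ → ℝ) (x y : ℕ → ℝ) (l i : ℕ) : ℝ :=
  errRev σ m K θ dloss x y (K + 1 - l) i *
    (if l = K + 1 then 1 else gFeat σ m θ x (l - 1) i)

/-- Differentiability of the loss in its first argument (on each finite-dimensional
coordinate block). -/
def LossDiff (loss : (ℕ → ℝ) → (ℕ → ℝ) → ℝ) : Prop :=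
  ∀ (y : ℕ → ℝ) (d : ℕ),
    Differentiable ℝ (fun u : Fin d → ℝ => loss (fun i => if h : i < d then u ⟨i, h⟩ else 0) y)

/-- Widths after adding one neuron in the paper's layer `p+1`. -/
def widen (m : ℕ → ℕ) (p : ℕ) : ℕ → ℕ := fun l => if l = p + 1 then m (p + 1) + 1 else m l

/-- One-step null embedding `T^α_{l,0}` at the paper's layer `l = p+1`. -/
def nullEmb (m : ℕ → ℕ) (p : ℕ) (α : ℝ) (θ : NNParams) : NNParams := fun l =>
  if l = p then
    ((fun i j => if i = m (p + 1) then 0 else (θ p).1 i j),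
     (fun i => if i = m (p + 1) then α else (θ p).2 i))
  else if l = p + 1 then
    ((fun i j => if j = m (p + 1) then 0 else (θ (p + 1)).1 i j), (θ (p + 1)).2)
  else θ l

/-- One-step splitting embedding `T^α_{l,s}` at the paper's layer `l = p+1`,
splitting neuron `s`. -/
def splitEmb (m : ℕ → ℕ) (p s : ℕ) (α : ℝ) (θ : NNParams) : NNParams := fun l =>
  if l = p then
    ((fun i j => if i = m (p + 1) then (θ p).1 s j else (θ p).1 i j),
     (fun i => if i = m (p + 1) then (θ p).2 s else (θ p).2 i))
  else if l = p + 1 then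
    ((fun i j =>
        if j = s then (1 - α) * (θ (p + 1)).1 i s
        else if j = m (p + 1) then α * (θ (p + 1)).1 i s
        else (θ (p + 1)).1 i j),
     (θ (p + 1)).2)
  else θ l

/-- A one-step embedding step: layer index `p` (the paper's layer `p+1`),
`none` for a null embedding / `some s` for splitting neuron `s`, and the
free parameter `α`. -/
abbrev EmbStep : Type := ℕ × Option ℕ × ℝ

/-- The one-step embedding determined by a step. -/
def stepEmb (m : ℕ → ℕ) (st : EmbStep) (θ : NNParams) : NNParams :=
  match st.2.1 with
  | none => nullEmb m st.1 st.2.2 θ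
  | some s => splitEmb m st.1 s st.2.2 θ

/-- Width function after performing a sequence of one-step embeddings. -/
def multiWidth (m : ℕ → ℕ) : List EmbStep → (ℕ → ℕ)
  | [] => m
  | st :: rest => multiWidth (widen m st.1) rest

/-- The multi-step composition embedding of a sequence of one-step embeddings. -/
def multiEmb (m : ℕ → ℕ) : List EmbStep → NNParams → NNParams
  | [], θ => θ
  | st :: rest, θ => multiEmb (widen m st.1) rest (stepEmb m st θ)

/-- Validity of a sequence of steps: each step acts on a layer `p+1 ∈ [L-1]` and,
for a splitting step, splits an existing neuron of the current width. -/
def ValidSteps (K : ℕ) (m : ℕ → ℕ) : List EmbStep → Prop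
  | [] => True
  | st :: rest => st.1 < K ∧ (∀ s, st.2.1 = some s → s < m (st.1 + 1)) ∧
      ValidSteps K (widen m st.1) rest

/-!
A null embedding adds a neuron `ν` with zero incoming weights and zero outgoing weights, so
it computes the constant `σ α` and contributes nothing. Along every coordinate line through the
embedded point, the wide risk is a reparametrisation of the narrow risk: an old coordinate is
moved as in the narrow network, a weight or bias into `ν` does not change the output at all,
and an outgoing weight `W_{iν} = t` of `ν` acts as the shift `b_i ↦ b_i + σ(α) t` of a bias of
the next layer. Hence every partial derivative of the wide risk is `0` or a multiple of a partial
derivative of the narrow risk. Adding the `m'_l - m_l` missing neurons of every hidden layer one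
at a time gives the required composition.
-/

open Finset

@[simp] lemma updW_fst_apply (θ : NNParams) (l i j : ℕ) (t : ℝ) (l' i' j' : ℕ) :
    (updW θ l i j t l').1 i' j' = if l' = l ∧ i' = i ∧ j' = j then t else (θ l').1 i' j' := by
  by_cases h : l' = l
  · subst h; simp [updW]
  · simp [updW, h]

@[simp] lemma updW_snd (θ : NNParams) (l i j : ℕ) (t : ℝ) (l' : ℕ) :
    (updW θ l i j t l').2 = (θ l').2 := by
  unfold updW; split_ifs with h <;> simp [h]

@[simp] lemma updB_fst (θ : NNParams) (l i : ℕ) (t : ℝ) (l' : ℕ) :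
    (updB θ l i t l').1 = (θ l').1 := by
  unfold updB; split_ifs with h <;> simp [h]

@[simp] lemma updB_snd_apply (θ : NNParams) (l i : ℕ) (t : ℝ) (l' i' : ℕ) :
    (updB θ l i t l').2 i' = if l' = l ∧ i' = i then t else (θ l').2 i' := by
  by_cases h : l' = l
  · subst h; simp [updB]
  · simp [updB, h]

lemma widen_of_ne {m : ℕ → ℕ} {p l : ℕ} (h : l ≠ p + 1) : widen m p l = m l := if_neg h

lemma widen_self (m : ℕ → ℕ) (p : ℕ) : widen m p (p + 1) = m (p + 1) + 1 := if_pos rfl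

namespace ParamEqOn

variable {m : ℕ → ℕ} {K : ℕ} {η' η : NNParams}

lemma updW_updW (h : ParamEqOn m K η' η) (l i j : ℕ) (t : ℝ) :
    ParamEqOn m K (updW η' l i j t) (updW η l i j t) := by
  intro l' hl' i' hi'
  refine ⟨fun j' hj' => ?_, by simpa using (h l' hl' i' hi').2⟩
  simp only [updW_fst_apply]
  split_ifs
  · rfl
  · exact (h l' hl' i' hi').1 j' hj'

lemma updW_left (h : ParamEqOn m K η' η) {l i j : ℕ} (t : ℝ)
    (hlij : l ≤ K → i < m (l + 1) → m l ≤ j) : ParamEqOn m K (updW η' l i j t) η := by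
  intro l' hl' i' hi'
  refine ⟨fun j' hj' => ?_, by simpa using (h l' hl' i' hi').2⟩
  rw [updW_fst_apply, if_neg (by rintro ⟨rfl, rfl, rfl⟩; exact absurd (hlij hl' hi') (by omega))]
  exact (h l' hl' i' hi').1 j' hj'

lemma updB_updB (h : ParamEqOn m K η' η) (l i : ℕ) (t : ℝ) :
    ParamEqOn m K (updB η' l i t) (updB η l i t) := by
  intro l' hl' i' hi'
  refine ⟨fun j' hj' => by simpa using (h l' hl' i' hi').1 j' hj', ?_⟩
  simp only [updB_snd_apply]
  split_ifs
  · rfl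
  · exact (h l' hl' i' hi').2

lemma updB_left (h : ParamEqOn m K η' η) {l i : ℕ} (t : ℝ) (hli : l ≤ K → m (l + 1) ≤ i) :
    ParamEqOn m K (updB η' l i t) η := by
  intro l' hl' i' hi'
  refine ⟨fun j' hj' => by simpa using (h l' hl' i' hi').1 j' hj', ?_⟩
  rw [updB_snd_apply, if_neg (by rintro ⟨rfl, rfl⟩; exact absurd (hli hl') (by omega))]
  exact (h l' hl' i' hi').2

end ParamEqOn

lemma feat_succ (σ : ℝ → ℝ) (m : ℕ → ℕ) (θ : NNParams) (x : ℕ → ℝ) (l i : ℕ) :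
    feat σ m θ x (l + 1) i = σ (preact σ m θ x l i) := rfl

lemma feat_succ_of_row_eq_zero (σ : ℝ → ℝ) (m : ℕ → ℕ) {η : NNParams} (x : ℕ → ℝ) {l k : ℕ}
    (hrow : ∀ j, (η l).1 k j = 0) : feat σ m η x (l + 1) k = σ ((η l).2 k) := by
  simp [feat, hrow]

lemma risk_eq_of_truncOut_eq (σ : ℝ → ℝ) {m₁ m₂ : ℕ → ℕ} (K : ℕ)
    (loss : (ℕ → ℝ) → (ℕ → ℝ) → ℝ) {n : ℕ} (X Y : Fin n → ℕ → ℝ) {η₁ η₂ : NNParams}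
    (h : ∀ x, truncOut σ m₁ K η₁ x = truncOut σ m₂ K η₂ x) :
    risk σ m₁ K loss X Y η₁ = risk σ m₂ K loss X Y η₂ := by
  simp only [risk, h]

section WidthCongr

variable (σ : ℝ → ℝ) {m₁ m₂ : ℕ → ℕ} (θ : NNParams) (x : ℕ → ℝ)

lemma feat_congr_width {l : ℕ} (h : ∀ t < l, m₁ t = m₂ t) (i : ℕ) :
    feat σ m₁ θ x l i = feat σ m₂ θ x l i := by
  induction l generalizing i with
  | zero => rfl
  | succ l ih =>
    simp only [feat, h l (by omega), ih (fun t ht => h t (by omega))]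

lemma preact_congr_width {l : ℕ} (h : ∀ t ≤ l, m₁ t = m₂ t) (i : ℕ) :
    preact σ m₁ θ x l i = preact σ m₂ θ x l i := by
  simp only [preact, h l le_rfl, feat_congr_width σ θ x (fun t ht => h t ht.le)]

lemma truncOut_congr_width {K : ℕ} (h : ∀ t ≤ K + 1, m₁ t = m₂ t) :
    truncOut σ m₁ K θ x = truncOut σ m₂ K θ x := by
  funext i
  simp only [truncOut, nnOut, h (K + 1) le_rfl,
    preact_congr_width σ θ x (l := K) (fun t ht => h t (by omega))]

end WidthCongr

lemma isCritical_congr_width {R : NNParams → ℝ} {m₁ m₂ : ℕ → ℕ} {K : ℕ} {θ : NNParams}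
    (h : ∀ t ≤ K + 1, m₁ t = m₂ t) (hc : IsCritical R m₁ K θ) : IsCritical R m₂ K θ :=
  ⟨fun l hl i hi j hj => hc.1 l hl i (by rwa [h (l + 1) (by omega)]) j (by rwa [h l (by omega)]),
    fun l hl i hi => hc.2 l hl i (by rwa [h (l + 1) (by omega)])⟩

section Widen

variable (σ : ℝ → ℝ) {m : ℕ → ℕ} {p K : ℕ} {η' η : NNParams} (x : ℕ → ℝ)

lemma preact_widen_eq
    (hW : ∀ l ≤ K, ∀ i < m (l + 1), ∀ j < m l, (η' l).1 i j = (η l).1 i j)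
    (hb : ∀ l ≤ K, l ≠ p + 1 → ∀ i < m (l + 1), (η' l).2 i = (η l).2 i)
    (hnew : ∀ i < m (p + 2), (η' (p + 1)).2 i
        + (η' (p + 1)).1 i (m (p + 1)) * feat σ (widen m p) η' x (p + 1) (m (p + 1))
        = (η (p + 1)).2 i) :
    ∀ l ≤ K, ∀ i < m (l + 1), preact σ (widen m p) η' x l i = preact σ m η x l i := by
  intro l
  induction l with
  | zero =>
    intro hl i hi
    simp only [preact, widen_of_ne (Nat.zero_ne_add_one p), hb 0 hl (by omega) i hi]
    congr 1
    exact sum_congr rfl fun j hj => by rw [hW 0 hl i hi j (mem_range.mp hj)]; rfl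
  | succ l ih =>
    intro hl i hi
    have hsum : ∑ j ∈ range (m (l + 1)), (η' (l + 1)).1 i j * feat σ (widen m p) η' x (l + 1) j
        = ∑ j ∈ range (m (l + 1)), (η (l + 1)).1 i j * feat σ m η x (l + 1) j :=
      sum_congr rfl fun j hj => by
        rw [hW _ hl i hi j (mem_range.mp hj), feat_succ, feat_succ, ih (by omega) j (mem_range.mp hj)]
    unfold preact
    by_cases hlp : l = p
    · subst hlp
      rw [widen_self, sum_range_succ, hsum, ← hnew i hi]
      ring
    · rw [widen_of_ne (by omega), hsum, hb _ hl (by omega) i hi]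

lemma truncOut_widen_eq (hp : p < K)
    (hW : ∀ l ≤ K, ∀ i < m (l + 1), ∀ j < m l, (η' l).1 i j = (η l).1 i j)
    (hb : ∀ l ≤ K, l ≠ p + 1 → ∀ i < m (l + 1), (η' l).2 i = (η l).2 i)
    (hnew : ∀ i < m (p + 2), (η' (p + 1)).2 i
        + (η' (p + 1)).1 i (m (p + 1)) * feat σ (widen m p) η' x (p + 1) (m (p + 1))
        = (η (p + 1)).2 i) :
    truncOut σ (widen m p) K η' x = truncOut σ m K η x := by
  funext i
  simp only [truncOut, nnOut, widen_of_ne (show K + 1 ≠ p + 1 by omega)]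
  split_ifs with hi
  · exact preact_widen_eq σ x hW hb hnew K le_rfl i hi
  · rfl

lemma truncOut_widen_eq_of_paramEqOn (hp : p < K) (hη : ParamEqOn m K η' η)
    (hcol : ∀ i, (η' (p + 1)).1 i (m (p + 1)) = 0) :
    truncOut σ (widen m p) K η' x = truncOut σ m K η x :=
  truncOut_widen_eq σ x hp (fun l hl i hi => (hη l hl i hi).1)
    (fun l hl _ i hi => (hη l hl i hi).2)
    (fun i hi => by rw [hcol, zero_mul, add_zero, (hη (p + 1) (by omega) i hi).2])

lemma risk_widen_eq_of_paramEqOn (loss : (ℕ → ℝ) → (ℕ → ℝ) → ℝ) {n : ℕ} (X Y : Fin n → ℕ → ℝ)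
    (hp : p < K) (hη : ParamEqOn m K η' η) (hcol : ∀ i, (η' (p + 1)).1 i (m (p + 1)) = 0) :
    risk σ (widen m p) K loss X Y η' = risk σ m K loss X Y η :=
  risk_eq_of_truncOut_eq σ K loss X Y fun x => truncOut_widen_eq_of_paramEqOn σ x hp hη hcol

lemma truncOut_updW_newCol (hp : p < K) (hη : ParamEqOn m K η' η)
    (hcol : ∀ i, (η' (p + 1)).1 i (m (p + 1)) = 0) (hrow : ∀ j, (η' p).1 (m (p + 1)) j = 0)
    {α : ℝ} (hbias : (η' p).2 (m (p + 1)) = α) (i : ℕ) (t : ℝ) :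
    truncOut σ (widen m p) K (updW η' (p + 1) i (m (p + 1)) t) x
      = truncOut σ m K (updB η (p + 1) i ((η (p + 1)).2 i + σ α * t)) x := by
  have hfeat : feat σ (widen m p) (updW η' (p + 1) i (m (p + 1)) t) x (p + 1) (m (p + 1))
      = σ α := by
    rw [feat_succ_of_row_eq_zero σ _ x (l := p) (fun j => by simp [hrow]), updW_snd, hbias]
  refine truncOut_widen_eq σ x hp (fun l hl i' hi' j hj => ?_) (fun l hl hlp i' hi' => ?_)
    (fun i' hi' => ?_)
  · rw [updW_fst_apply, if_neg (by rintro ⟨rfl, -, rfl⟩; omega), updB_fst]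
    exact (hη l hl i' hi').1 j hj
  · simpa [hlp] using (hη l hl i' hi').2
  · rw [hfeat]
    by_cases hii : i' = i
    · subst hii
      simp [(hη (p + 1) (by omega) i' hi').2, mul_comm]
    · simp [hii, hcol, (hη (p + 1) (by omega) i' hi').2]

end Widen

section NullEmb

variable {m : ℕ → ℕ} {p : ℕ} {α : ℝ} {θ : NNParams}

lemma paramEqOn_nullEmb (K : ℕ) : ParamEqOn m K (nullEmb m p α θ) θ := by
  intro l _ i hi
  refine ⟨fun j hj => ?_, ?_⟩ <;> unfold nullEmb <;> split_ifs <;> subst_vars <;> simp <;> omega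

lemma nullEmb_newCol (i : ℕ) : ((nullEmb m p α θ) (p + 1)).1 i (m (p + 1)) = 0 := by
  simp [nullEmb]

lemma nullEmb_newRow (j : ℕ) : ((nullEmb m p α θ) p).1 (m (p + 1)) j = 0 := by
  simp [nullEmb]

lemma nullEmb_newBias : ((nullEmb m p α θ) p).2 (m (p + 1)) = α := by
  simp [nullEmb]

end NullEmb

lemma deriv_comp_affine_zero (g : ℝ → ℝ) (b c : ℝ) :
    deriv (fun t => g (b + c * t)) 0 = c * deriv g b := by
  rw [deriv_comp_mul_left c (fun u => g (b + u)), deriv_comp_const_add, mul_zero, add_zero,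
    smul_eq_mul]

section IsCritical

variable (σ : ℝ → ℝ) {m : ℕ → ℕ} {p K : ℕ} (loss : (ℕ → ℝ) → (ℕ → ℝ) → ℝ) {n : ℕ}
  (X Y : Fin n → ℕ → ℝ) (α : ℝ) {θ : NNParams}

lemma deriv_risk_updW_nullEmb (hp : p < K) (hc : IsCritical (risk σ m K loss X Y) m K θ)
    {l i j : ℕ} (hl : l ≤ K) (hi : i < widen m p (l + 1)) :
    deriv (fun t => risk σ (widen m p) K loss X Y (updW (nullEmb m p α θ) l i j t))
      ((nullEmb m p α θ l).1 i j) = 0 := by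
  have hθ : ParamEqOn m K (nullEmb m p α θ) θ := paramEqOn_nullEmb K
  have hcol : ∀ i, (nullEmb m p α θ (p + 1)).1 i (m (p + 1)) = 0 := nullEmb_newCol
  by_cases hold : i < m (l + 1) ∧ j < m l
  · have hline : (fun t => risk σ (widen m p) K loss X Y (updW (nullEmb m p α θ) l i j t))
        = fun t => risk σ m K loss X Y (updW θ l i j t) :=
      funext fun t => risk_widen_eq_of_paramEqOn σ loss X Y hp (hθ.updW_updW l i j t) fun i' => by
        simp only [updW_fst_apply, hcol]
        split_ifs with h
        · obtain ⟨rfl, -, rfl⟩ := h; omega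
        · rfl
    rw [hline, (hθ l hl i hold.1).1 j hold.2]
    exact hc.1 l hl i hold.1 j hold.2
  by_cases hν : l = p + 1 ∧ j = m (p + 1)
  · obtain ⟨rfl, rfl⟩ := hν
    have hi' : i < m (p + 2) := by rwa [widen_of_ne (by omega)] at hi
    have hline : (fun t => risk σ (widen m p) K loss X Y
          (updW (nullEmb m p α θ) (p + 1) i (m (p + 1)) t))
        = fun t => risk σ m K loss X Y (updB θ (p + 1) i ((θ (p + 1)).2 i + σ α * t)) :=
      funext fun t => risk_eq_of_truncOut_eq σ K loss X Y fun x =>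
        truncOut_updW_newCol σ x hp hθ hcol nullEmb_newRow nullEmb_newBias i t
    rw [hline, hcol i, deriv_comp_affine_zero (fun s => risk σ m K loss X Y (updB θ (p + 1) i s)),
      hc.2 (p + 1) hl i hi', mul_zero]
  · have hline : (fun t => risk σ (widen m p) K loss X Y (updW (nullEmb m p α θ) l i j t))
        = fun _ => risk σ m K loss X Y θ :=
      funext fun t => risk_widen_eq_of_paramEqOn σ loss X Y hp
        (hθ.updW_left t fun _ _ => by omega) fun i' => by
          simp only [updW_fst_apply, hcol]
          split_ifs with h
          · exact absurd ⟨h.1.symm, h.2.2.symm⟩ hν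
          · rfl
    rw [hline]
    exact deriv_const _ _

lemma deriv_risk_updB_nullEmb (hp : p < K) (hc : IsCritical (risk σ m K loss X Y) m K θ)
    {l i : ℕ} (hl : l ≤ K) :
    deriv (fun t => risk σ (widen m p) K loss X Y (updB (nullEmb m p α θ) l i t))
      ((nullEmb m p α θ l).2 i) = 0 := by
  have hθ : ParamEqOn m K (nullEmb m p α θ) θ := paramEqOn_nullEmb K
  have hcol (i' : ℕ) : ∀ t, (updB (nullEmb m p α θ) l i t (p + 1)).1 i' (m (p + 1)) = 0 := by
    simp [nullEmb_newCol]
  by_cases hold : i < m (l + 1)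
  · have hline : (fun t => risk σ (widen m p) K loss X Y (updB (nullEmb m p α θ) l i t))
        = fun t => risk σ m K loss X Y (updB θ l i t) :=
      funext fun t => risk_widen_eq_of_paramEqOn σ loss X Y hp (hθ.updB_updB l i t) (hcol · t)
    rw [hline, (hθ l hl i hold).2]
    exact hc.2 l hl i hold
  · have hline : (fun t => risk σ (widen m p) K loss X Y (updB (nullEmb m p α θ) l i t))
        = fun _ => risk σ m K loss X Y θ :=
      funext fun t => risk_widen_eq_of_paramEqOn σ loss X Y hp
        (hθ.updB_left t fun _ => by omega) (hcol · t)
    rw [hline]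
    exact deriv_const _ _

theorem isCritical_nullEmb (hp : p < K) (hc : IsCritical (risk σ m K loss X Y) m K θ) :
    IsCritical (risk σ (widen m p) K loss X Y) (widen m p) K (nullEmb m p α θ) :=
  ⟨fun _ hl _ hi _ _ => deriv_risk_updW_nullEmb σ loss X Y α hp hc hl hi,
    fun _ hl _ _ => deriv_risk_updB_nullEmb σ loss X Y α hp hc hl⟩

end IsCritical

lemma stepEmb_of_none (m : ℕ → ℕ) {st : EmbStep} (h : st.2.1 = none) (θ : NNParams) :
    stepEmb m st θ = nullEmb m st.1 st.2.2 θ := by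
  simp [stepEmb, h]

section MultiNull

variable (σ : ℝ → ℝ) {K : ℕ}

lemma truncOut_multiEmb_of_null :
    ∀ {steps : List EmbStep}, (∀ st ∈ steps, st.1 < K ∧ st.2.1 = none) →
      ∀ (m : ℕ → ℕ) (θ : NNParams) (x : ℕ → ℝ),
        truncOut σ (multiWidth m steps) K (multiEmb m steps θ) x = truncOut σ m K θ x
  | [], _, _, _, _ => rfl
  | st :: rest, h, m, θ, x => by
    obtain ⟨hp, hnull⟩ := h st List.mem_cons_self
    rw [multiWidth, multiEmb, truncOut_multiEmb_of_null (fun s hs => h s (List.mem_cons_of_mem _ hs)),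
      stepEmb_of_none m hnull, truncOut_widen_eq_of_paramEqOn σ x hp (paramEqOn_nullEmb K)
        nullEmb_newCol]

lemma isCritical_multiEmb_of_null (loss : (ℕ → ℝ) → (ℕ → ℝ) → ℝ) {n : ℕ}
    (X Y : Fin n → ℕ → ℝ) :
    ∀ {steps : List EmbStep}, (∀ st ∈ steps, st.1 < K ∧ st.2.1 = none) →
      ∀ {m : ℕ → ℕ} {θ : NNParams}, IsCritical (risk σ m K loss X Y) m K θ →
        IsCritical (risk σ (multiWidth m steps) K loss X Y) (multiWidth m steps) K
          (multiEmb m steps θ)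
  | [], _, _, _, hc => hc
  | st :: rest, h, m, θ, hc => by
    obtain ⟨hp, hnull⟩ := h st List.mem_cons_self
    refine isCritical_multiEmb_of_null loss X Y (fun s hs => h s (List.mem_cons_of_mem _ hs)) ?_
    rw [stepEmb_of_none m hnull]
    exact isCritical_nullEmb σ loss X Y _ hp hc

end MultiNull

lemma validSteps_of_null {K : ℕ} :
    ∀ {steps : List EmbStep} (m : ℕ → ℕ), (∀ st ∈ steps, st.1 < K ∧ st.2.1 = none) →
      ValidSteps K m steps
  | [], _, _ => trivial
  | st :: _, m, h => ⟨(h st List.mem_cons_self).1,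
      fun s hs => by simp [(h st List.mem_cons_self).2] at hs,
      validSteps_of_null (widen m st.1) fun s hs => h s (List.mem_cons_of_mem _ hs)⟩

lemma multiWidth_apply :
    ∀ (m : ℕ → ℕ) (steps : List EmbStep) (l : ℕ),
      multiWidth m steps l = m l + steps.countP (fun st => st.1 + 1 = l)
  | _, [], _ => rfl
  | m, st :: rest, l => by
    rw [multiWidth, multiWidth_apply, List.countP_cons, widen]
    split_ifs <;> simp_all
    omega

def nullSteps (m m' : ℕ → ℕ) : ℕ → List EmbStep
  | 0 => []
  | k + 1 => nullSteps m m' k ++ List.replicate (m' (k + 1) - m (k + 1)) (k, none, 0)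

lemma mem_nullSteps {m m' : ℕ → ℕ} {k : ℕ} {st : EmbStep} (h : st ∈ nullSteps m m' k) :
    st.1 < k ∧ st.2.1 = none := by
  induction k with
  | zero => simp [nullSteps] at h
  | succ k ih =>
    rcases List.mem_append.mp h with h | h
    · exact ⟨(ih h).1.trans k.lt_succ_self, (ih h).2⟩
    · rw [List.eq_of_mem_replicate h]
      exact ⟨k.lt_succ_self, rfl⟩

lemma countP_nullSteps (m m' : ℕ → ℕ) (k l : ℕ) :
    (nullSteps m m' k).countP (fun st => st.1 + 1 = l)
      = if 1 ≤ l ∧ l ≤ k then m' l - m l else 0 := by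
  induction k with
  | zero => rw [if_neg (by omega)]; rfl
  | succ k ih =>
    rw [nullSteps, List.countP_append, ih, List.countP_replicate]
    split_ifs <;> simp_all <;> omega

lemma multiWidth_nullSteps {K : ℕ} {m m' : ℕ → ℕ} (h0 : m' 0 = m 0)
    (hLtop : m' (K + 1) = m (K + 1)) (hle : ∀ l, 1 ≤ l → l ≤ K → m l ≤ m' l) :
    ∀ l ≤ K + 1, multiWidth m (nullSteps m m' K) l = m' l := by
  intro l hl
  rw [multiWidth_apply, countP_nullSteps]
  split_ifs with h
  · have := hle l h.1 h.2
    omega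
  · obtain rfl | rfl : l = 0 ∨ l = K + 1 := by omega
    exacts [h0.symm, hLtop.symm]

theorem embedding_principle_general
    (K : ℕ) (m m' : ℕ → ℕ)
    (h0 : m' 0 = m 0) (hLtop : m' (K + 1) = m (K + 1))
    (hle : ∀ l, 1 ≤ l → l ≤ K → m l ≤ m' l) :
    ∃ steps : List EmbStep,
      ValidSteps K m steps ∧
      (∀ l, l ≤ K + 1 → multiWidth m steps l = m' l) ∧
      ∀ (σ : ℝ → ℝ), Differentiable ℝ σ →
      ∀ loss : (ℕ → ℝ) → (ℕ → ℝ) → ℝ, LossDiff loss →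
      ∀ (n : ℕ) (X Y : Fin n → ℕ → ℝ) (θc : NNParams),
        IsCritical (risk σ m K loss X Y) m K θc →
        IsCritical (risk σ m' K loss X Y) m' K (multiEmb m steps θc) ∧
        ∀ (x : ℕ → ℝ) (i : ℕ), i < m (K + 1) →
          nnOut σ m' K (multiEmb m steps θc) x i = nnOut σ m K θc x i := by
  have hnull : ∀ st ∈ nullSteps m m' K, st.1 < K ∧ st.2.1 = none := fun _ => mem_nullSteps
  have hwidth := multiWidth_nullSteps h0 hLtop hle
  refine ⟨nullSteps m m' K, validSteps_of_null m hnull, hwidth,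
    fun σ _ loss _ n X Y θc hc => ⟨?_, fun x i hi => ?_⟩⟩
  · have hrisk : risk σ (multiWidth m (nullSteps m m' K)) K loss X Y = risk σ m' K loss X Y :=
      funext fun θ => risk_eq_of_truncOut_eq σ K loss X Y fun x =>
        truncOut_congr_width σ θ x hwidth
    exact isCritical_congr_width hwidth (hrisk ▸ isCritical_multiEmb_of_null σ loss X Y hnull hc)
  · have hout := congrFun (truncOut_multiEmb_of_null σ hnull m θc x) i
    rw [truncOut_congr_width σ _ x hwidth] at hout
    simpa [truncOut, hLtop, hi] using hout

/-- Embedding Principle: for any `K'`-neuron wider network there is a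
composition of one-step embeddings mapping every critical point of the narrow network
to a critical point of the wider network with the same output function. -/
theorem embedding_principle
    (K : ℕ) (hK : 1 ≤ K) (m m' : ℕ → ℕ)
    (h0 : m' 0 = m 0) (hLtop : m' (K + 1) = m (K + 1))
    (hle : ∀ l, 1 ≤ l → l ≤ K → m l ≤ m' l) :
    ∃ steps : List EmbStep,
      ValidSteps K m steps ∧
      (∀ l, l ≤ K + 1 → multiWidth m steps l = m' l) ∧
      ∀ (σ : ℝ → ℝ), Differentiable ℝ σ →
      ∀ loss : (ℕ → ℝ) → (ℕ → ℝ) → ℝ, LossDiff loss →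
      ∀ (n : ℕ) (X Y : Fin n → ℕ → ℝ) (θc : NNParams),
        IsCritical (risk σ m K loss X Y) m K θc →
        IsCritical (risk σ m' K loss X Y) m' K (multiEmb m steps θc) ∧
        ∀ (x : ℕ → ℝ) (i : ℕ), i < m (K + 1) →
          nnOut σ m' K (multiEmb m steps θc) x i = nnOut σ m K θc x i :=
  embedding_principle_general K m m' h0 hLtop hle

end EmbeddingPrinciple
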